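/- Let γ > 0, μ₀ > 0, a ∈ (0, 1/2), t ∈ (0, μ₀/(2γ)), and μ < μ₀ - γt. Then ∫₀^t (t-s)^{-1/2} (μ₀ - μ - γs)^{-(1+a)} ds ≤ C γ^{-1/2} (μ₀ - μ - γt)^{-(1/2+a)} for a constant C depending only on a. -/

import Mathlib

/-!
After reflecting `s ↦ t - s` and writing `d = μ₀ - μ - γ t`, the integral is
`∫₀^t τ^(-1/2) (d + γ τ)^(-(1+a)) dτ`; the substitution `τ = (d/γ) u` turns it into
`γ^(-1/2) d^(-(1/2+a)) ∫₀^(γt/d) u^(-1/2) (1 + u)^(-(1+a)) du`. The last integral is bounded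
uniformly in its upper limit by splitting at `u = 1`: near `0` the integrand is at most `u^(-1/2)`,
beyond `1` at most `u^(-(3/2+a))`.
-/

open intervalIntegral MeasureTheory Set

section

variable {p q : ℝ}

theorem intervalIntegrable_rpow_mul_one_add_rpow (hp : p < 1) {x : ℝ} (hx : 0 ≤ x) :
    IntervalIntegrable (fun u : ℝ => u ^ (-p) * (1 + u) ^ (-q)) volume 0 x := by
  refine (intervalIntegrable_rpow' (by linarith)).mul_continuousOn ?_
  refine (continuousOn_const.add continuousOn_id).rpow_const fun u hu => Or.inl ?_
  rw [uIcc_of_le hx] at hu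
  exact (by linarith [hu.1] : (0 : ℝ) < 1 + u).ne'

theorem integral_rpow_mul_one_add_rpow_le (hp : p < 1) (hpq : 1 < p + q) {x : ℝ} (hx : 0 ≤ x) :
    ∫ u in (0 : ℝ)..x, u ^ (-p) * (1 + u) ^ (-q) ≤ 1 / (1 - p) + 1 / (p + q - 1) := by
  set f : ℝ → ℝ := fun u => u ^ (-p) * (1 + u) ^ (-q)
  set X := max x 1
  have hq : 0 ≤ q := by linarith
  have hfX : IntervalIntegrable f volume 0 X :=
    intervalIntegrable_rpow_mul_one_add_rpow hp (le_max_of_le_right zero_le_one)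
  have hf_nonneg : ∀ u, 0 ≤ u → 0 ≤ f u := fun u hu =>
    mul_nonneg (Real.rpow_nonneg hu _) (Real.rpow_nonneg (by linarith) _)
  have hf01 : IntervalIntegrable f volume 0 1 := hfX.mono_set (by
    rw [uIcc_of_le zero_le_one, uIcc_of_le (le_max_of_le_right zero_le_one)]
    exact Icc_subset_Icc le_rfl (le_max_right _ _))
  have hf1X : IntervalIntegrable f volume 1 X := hfX.mono_set (by
    rw [uIcc_of_le (le_max_right _ _), uIcc_of_le (le_max_of_le_right zero_le_one)]
    exact Icc_subset_Icc zero_le_one le_rfl)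
  have near_zero : ∫ u in (0 : ℝ)..1, f u ≤ 1 / (1 - p) := by
    calc ∫ u in (0 : ℝ)..1, f u ≤ ∫ u in (0 : ℝ)..1, u ^ (-p) := by
          refine integral_mono_on zero_le_one hf01 (intervalIntegrable_rpow' (by linarith))
            fun u hu => mul_le_of_le_one_right (Real.rpow_nonneg hu.1 _) ?_
          exact Real.rpow_le_one_of_one_le_of_nonpos (by linarith [hu.1]) (by linarith)
      _ = 1 / (1 - p) := by
          rw [integral_rpow (Or.inl (by linarith)), Real.zero_rpow (by linarith), Real.one_rpow,
            sub_zero, neg_add_eq_sub]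
  have near_infinity : ∫ u in (1 : ℝ)..X, f u ≤ 1 / (p + q - 1) := by
    have h0 : (0 : ℝ) ∉ uIcc 1 X := by
      rw [uIcc_of_le (le_max_right _ _)]; exact fun h => by linarith [h.1]
    calc ∫ u in (1 : ℝ)..X, f u ≤ ∫ u in (1 : ℝ)..X, u ^ (-(p + q)) := by
          refine integral_mono_on (le_max_right _ _) hf1X (intervalIntegrable_rpow (Or.inr h0))
            fun u hu => ?_
          have hu0 : 0 < u := by linarith [hu.1]
          calc f u ≤ u ^ (-p) * u ^ (-q) :=
                mul_le_mul_of_nonneg_left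
                  (Real.rpow_le_rpow_of_nonpos hu0 (by linarith) (by linarith))
                  (Real.rpow_nonneg hu0.le _)
            _ = u ^ (-(p + q)) := by rw [← Real.rpow_add hu0]; ring_nf
      _ = (1 - X ^ (1 - (p + q))) / (p + q - 1) := by
          rw [integral_rpow (Or.inr ⟨by linarith, h0⟩), Real.one_rpow]
          rw [show -(p + q) + 1 = -(p + q - 1) by ring, div_neg, ← neg_div]
          ring_nf
      _ ≤ 1 / (p + q - 1) := by
          gcongr
          linarith [Real.rpow_nonneg (zero_le_one.trans (le_max_right x 1)) (1 - (p + q))]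
  calc ∫ u in (0 : ℝ)..x, f u ≤ ∫ u in (0 : ℝ)..X, f u :=
        integral_mono_interval le_rfl hx (le_max_left _ _)
          ((ae_restrict_mem measurableSet_Ioc).mono fun u hu => hf_nonneg u hu.1.le) hfX
    _ = (∫ u in (0 : ℝ)..1, f u) + ∫ u in (1 : ℝ)..X, f u :=
        (integral_add_adjacent_intervals hf01 hf1X).symm
    _ ≤ 1 / (1 - p) + 1 / (p + q - 1) := add_le_add near_zero near_infinity

theorem integral_rpow_mul_add_mul_rpow_eq {d γ t : ℝ} (hd : 0 < d) (hγ : 0 < γ) (ht : 0 ≤ t) :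
    ∫ τ in (0 : ℝ)..t, τ ^ (-p) * (d + γ * τ) ^ (-q) =
      γ ^ (p - 1) * d ^ (1 - p - q) * ∫ u in (0 : ℝ)..γ / d * t, u ^ (-p) * (1 + u) ^ (-q) := by
  set c := γ / d
  have hc : 0 < c := div_pos hγ hd
  have pointwise : ∀ τ ∈ uIcc 0 t, τ ^ (-p) * (d + γ * τ) ^ (-q) =
      c ^ p * d ^ (-q) * ((c * τ) ^ (-p) * (1 + c * τ) ^ (-q)) := by
    intro τ hτ
    rw [uIcc_of_le ht] at hτ
    have hdτ : d + γ * τ = d * (1 + c * τ) := by simp only [c]; field_simp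
    rw [hdτ, Real.mul_rpow hd.le (by nlinarith [hτ.1]), Real.mul_rpow hc.le hτ.1,
      Real.rpow_neg hc.le p]
    field_simp [(Real.rpow_pos_of_pos hc p).ne']
  rw [integral_congr pointwise, intervalIntegral.integral_const_mul,
    integral_comp_mul_left (fun u => u ^ (-p) * (1 + u) ^ (-q)) hc.ne', mul_zero, smul_eq_mul,
    ← mul_assoc]
  congr 1
  rw [Real.div_rpow hγ.le hd.le, Real.rpow_sub hγ, Real.rpow_sub hd, Real.rpow_sub hd,
    Real.rpow_one, Real.rpow_one, Real.rpow_neg hd.le]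
  simp only [c]
  field_simp

end

theorem trace_kernel_time_integral_general (a : ℝ) (ha0 : 0 < a) :
    ∃ C : ℝ, 0 < C ∧ ∀ γ μ₀ t μ : ℝ, 0 < γ → 0 < μ₀ → 0 < t → t < μ₀ / (2 * γ) →
      μ < μ₀ - γ * t →
      ∫ s in (0 : ℝ)..t, (t - s) ^ (-(1 / 2) : ℝ) * (μ₀ - μ - γ * s) ^ (-(1 + a) : ℝ) ≤
        C * γ ^ (-(1 / 2) : ℝ) * (μ₀ - μ - γ * t) ^ (-(1 / 2 + a) : ℝ) := by
  refine ⟨2 + 1 / (1 / 2 + a), by positivity, ?_⟩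
  intro γ μ₀ t μ hγ _ ht _ hμ
  set d := μ₀ - μ - γ * t
  have hd : 0 < d := by linarith
  have reflect : ∫ s in (0 : ℝ)..t, (t - s) ^ (-(1 / 2) : ℝ) * (μ₀ - μ - γ * s) ^ (-(1 + a) : ℝ) =
      ∫ τ in (0 : ℝ)..t, τ ^ (-(1 / 2) : ℝ) * (d + γ * τ) ^ (-(1 + a) : ℝ) := by
    have := integral_comp_sub_left
      (fun τ : ℝ => τ ^ (-(1 / 2) : ℝ) * (d + γ * τ) ^ (-(1 + a) : ℝ)) t (a := 0) (b := t)
    rw [sub_self, sub_zero] at this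
    rw [← this]
    refine integral_congr fun s _ => ?_
    simp only [d]
    ring_nf
  have bound := integral_rpow_mul_one_add_rpow_le (p := 1 / 2) (q := 1 + a) (by norm_num)
    (by linarith) (x := γ / d * t) (by positivity)
  rw [show (1 : ℝ) / (1 - 1 / 2) + 1 / (1 / 2 + (1 + a) - 1) = 2 + 1 / (1 / 2 + a) by ring_nf]
    at bound
  rw [reflect, integral_rpow_mul_add_mul_rpow_eq hd hγ ht.le,
    show (1 : ℝ) / 2 - 1 = -(1 / 2) by norm_num, show 1 - 1 / 2 - (1 + a) = -(1 / 2 + a) by ring]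
  calc _ ≤ γ ^ (-(1 / 2) : ℝ) * d ^ (-(1 / 2 + a) : ℝ) * (2 + 1 / (1 / 2 + a)) := by gcongr
    _ = _ := by ring

theorem trace_kernel_time_integral (a : ℝ) (ha0 : 0 < a) (ha : a < 1 / 2) :
    ∃ C : ℝ, 0 < C ∧ ∀ γ μ₀ t μ : ℝ, 0 < γ → 0 < μ₀ → 0 < t → t < μ₀ / (2 * γ) →
      μ < μ₀ - γ * t →
      ∫ s in (0 : ℝ)..t, (t - s) ^ (-(1 / 2) : ℝ) * (μ₀ - μ - γ * s) ^ (-(1 + a) : ℝ) ≤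
        C * γ ^ (-(1 / 2) : ℝ) * (μ₀ - μ - γ * t) ^ (-(1 / 2 + a) : ℝ) :=
  trace_kernel_time_integral_general a ha0
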